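/- (Proposition 3.2: transition property of Φ_q.) Let n ≥ 1, let i, k ∈ ℤ_{≥0}^n with i ≤ k componentwise, and let a, b, c ∈ ℂ with a ≠ 0, b ≠ 0, (b;q)_{|k|} ≠ 0 and (c;q)_{|k|} ≠ 0. Then ∑_{j ∈ ℤ^n, i ≤ j ≤ k} Φ_q(i|j;a,b) · Φ_q(j|k;b,c) = Φ_q(i|k;a,c). -/

import Mathlib

/-!
Removing the last coordinate factors `Φ_q(γ|β;λ,μ)` as `Φ_q(γ'|β';λ,μ)`, where `γ'`, `β'` are the
first `n - 1` coordinates, times a one-dimensional `Φ_q` with parameters shifted to `λ q^{|γ'|}`,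
`μ q^{|β'|}`: the extra power `q^{(|β'| - |γ'|) γ_n}` coming from `⟨β - γ, γ⟩` is exactly what the
shift does to `(μ/λ)^{γ_n}`. The transition sum factors accordingly, so by induction on `n` it
reduces to `n = 1`. There, the q-binomial identity `[m, j] [j, g] = [m, g] [m - g, j - g]` turns the
sum into the q-Chu–Vandermonde sum `∑_t [N, t] (u;q)_t (v;q)_{N-t} v^t = (uv;q)_N` with `u = b/a`,
`v = c/b`.
-/

noncomputable section
open scoped Classical

/-- `(u;q)_m = ∏_{k=0}^{m−1}(1−u q^k)`. -/
def qPochGen (q u : ℂ) (m : ℕ) : ℂ := ∏ k ∈ Finset.range m, (1 - u * q ^ k)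

/-- `(q;q)_m`. -/
def qPoch (q : ℂ) (m : ℕ) : ℂ := ∏ k ∈ Finset.range m, (1 - q ^ (k + 1))

/-- `|i| = ∑ i_a`. -/
def isum {n : ℕ} (i : Fin n → ℤ) : ℤ := ∑ a, i a

/-- `⟨i,j⟩ = ∑_{a<b} i_a j_b`. -/
def ipair {n : ℕ} (i j : Fin n → ℤ) : ℤ :=
  ∑ a, ∑ b, if a < b then i a * j b else 0

/-- the function `Φ_q(γ|β;λ,μ)`. -/
def Phi (q : ℂ) {n : ℕ} (γ β : Fin n → ℤ) (lam mu : ℂ) : ℂ :=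
  if 0 ≤ γ ∧ γ ≤ β then
    q ^ (ipair (β - γ) γ) * (mu / lam) ^ (isum γ).toNat
      * qPochGen q lam (isum γ).toNat
      * qPochGen q (mu / lam) (isum β - isum γ).toNat
      / qPochGen q mu (isum β).toNat
      * ∏ a, (qPoch q (β a).toNat / (qPoch q (γ a).toNat * qPoch q (β a - γ a).toNat))
  else 0

variable {q : ℂ}

@[simp] lemma qPochGen_zero (q u : ℂ) : qPochGen q u 0 = 1 := rfl

lemma qPochGen_succ (q u : ℂ) (m : ℕ) :
    qPochGen q u (m + 1) = qPochGen q u m * (1 - u * q ^ m) :=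
  Finset.prod_range_succ _ _

lemma qPochGen_add (q u : ℂ) (m l : ℕ) :
    qPochGen q u (m + l) = qPochGen q u m * qPochGen q (u * q ^ m) l := by
  rw [qPochGen, Finset.prod_range_add]
  simp only [pow_add, mul_assoc, qPochGen]

lemma qPochGen_mul_pow_ne_zero {u : ℂ} {M : ℕ} (hM : qPochGen q u M ≠ 0) {s m : ℕ}
    (h : s + m ≤ M) : qPochGen q (u * q ^ s) m ≠ 0 := by
  obtain ⟨r, rfl⟩ := Nat.exists_eq_add_of_le h
  rw [qPochGen_add, qPochGen_add] at hM
  exact right_ne_zero_of_mul (left_ne_zero_of_mul hM)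

lemma qPochGen_ne_zero_of_le {u : ℂ} {M m : ℕ} (hM : qPochGen q u M ≠ 0) (h : m ≤ M) :
    qPochGen q u m ≠ 0 := by
  simpa using qPochGen_mul_pow_ne_zero hM (s := 0) (by omega)

@[simp] lemma qPoch_zero (q : ℂ) : qPoch q 0 = 1 := rfl

lemma qPoch_succ (q : ℂ) (m : ℕ) : qPoch q (m + 1) = qPoch q m * (1 - q ^ (m + 1)) :=
  Finset.prod_range_succ _ _

lemma one_sub_pow_succ_ne_zero (hq : ∀ m : ℕ, 0 < m → q ^ m ≠ 1) (m : ℕ) :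
    1 - q ^ (m + 1) ≠ 0 :=
  sub_ne_zero.mpr (hq (m + 1) m.succ_pos).symm

lemma qPoch_ne_zero (hq : ∀ m : ℕ, 0 < m → q ^ m ≠ 1) (m : ℕ) : qPoch q m ≠ 0 :=
  Finset.prod_ne_zero_iff.mpr fun k _ => one_sub_pow_succ_ne_zero hq k

def qBinom (q : ℂ) (N t : ℕ) : ℂ :=
  if t ≤ N then qPoch q N / (qPoch q t * qPoch q (N - t)) else 0

lemma qBinom_of_lt {N t : ℕ} (h : N < t) : qBinom q N t = 0 :=
  if_neg (not_le.mpr h)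

lemma qBinom_zero_right (hq : ∀ m : ℕ, 0 < m → q ^ m ≠ 1) (N : ℕ) : qBinom q N 0 = 1 := by
  simp [qBinom, qPoch_ne_zero hq N]

lemma qBinom_self (hq : ∀ m : ℕ, 0 < m → q ^ m ≠ 1) (N : ℕ) : qBinom q N N = 1 := by
  simp [qBinom, qPoch_ne_zero hq N]

lemma qBinom_succ_succ (hq : ∀ m : ℕ, 0 < m → q ^ m ≠ 1) (N t : ℕ) :
    qBinom q (N + 1) (t + 1) = qBinom q N (t + 1) + q ^ (N - t) * qBinom q N t := by
  rcases lt_trichotomy t N with h | rfl | h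
  · obtain ⟨d, rfl⟩ := Nat.exists_eq_add_of_lt h
    have hd₁ : t + d + 1 + 1 - (t + 1) = d + 1 := by omega
    have hd₂ : t + d + 1 - (t + 1) = d := by omega
    have hd₃ : t + d + 1 - t = d + 1 := by omega
    simp only [qBinom, if_pos (by omega : t + 1 ≤ t + d + 1 + 1),
      if_pos (by omega : t + 1 ≤ t + d + 1), if_pos (by omega : t ≤ t + d + 1), hd₁, hd₂, hd₃]
    rw [qPoch_succ q (t + d + 1), qPoch_succ q t, qPoch_succ q d]
    have := qPoch_ne_zero hq t
    have := qPoch_ne_zero hq d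
    have := one_sub_pow_succ_ne_zero hq t
    have := one_sub_pow_succ_ne_zero hq d
    field_simp
    ring
  · rw [qBinom_self hq, qBinom_self hq, qBinom_of_lt t.lt_succ_self]
    simp
  · rw [qBinom_of_lt (by omega), qBinom_of_lt (by omega), qBinom_of_lt h]
    simp

lemma qBinom_mul_qBinom (hq : ∀ m : ℕ, 0 < m → q ^ m ≠ 1) {n k s : ℕ} (hsk : s ≤ k)
    (hkn : k ≤ n) :
    qBinom q n k * qBinom q k s = qBinom q n s * qBinom q (n - s) (k - s) := by
  have hnk : n - s - (k - s) = n - k := by omega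
  simp only [qBinom, if_pos hsk, if_pos hkn, if_pos (hsk.trans hkn),
    if_pos (Nat.sub_le_sub_right hkn s), hnk]
  have := qPoch_ne_zero hq k
  have := qPoch_ne_zero hq (n - s)
  have := qPoch_ne_zero hq s
  have := qPoch_ne_zero hq (k - s)
  have := qPoch_ne_zero hq (n - k)
  field_simp

lemma qVandermonde (hq : ∀ m : ℕ, 0 < m → q ^ m ≠ 1) (u v : ℂ) (N : ℕ) :
    ∑ t ∈ Finset.range (N + 1), qBinom q N t * qPochGen q u t * qPochGen q v (N - t) * v ^ t
      = qPochGen q (u * v) N := by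
  induction N with
  | zero => simp [qBinom_zero_right hq]
  | succ N ih =>
    set g : ℕ → ℂ := fun t => qPochGen q u t * qPochGen q v (N + 1 - t) * v ^ t
    have hg : ∀ t, qPochGen q u t * qPochGen q v (N + 1 - t) * v ^ t = g t := fun _ => rfl
    have hterm : ∀ t ∈ Finset.range (N + 1), qBinom q N t * g t
        + q ^ (N - t) * qBinom q N t * g (t + 1)
        = (1 - u * v * q ^ N) * (qBinom q N t * qPochGen q u t * qPochGen q v (N - t) * v ^ t) := by
      intro t ht
      have htN : t ≤ N := Nat.lt_succ_iff.mp (Finset.mem_range.mp ht)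
      have hqN : q ^ N = q ^ (N - t) * q ^ t := by rw [← pow_add, Nat.sub_add_cancel htN]
      simp only [g, Nat.succ_sub htN, Nat.add_sub_add_right, qPochGen_succ, hqN]
      ring
    calc ∑ t ∈ Finset.range (N + 1 + 1), qBinom q (N + 1) t * qPochGen q u t
            * qPochGen q v (N + 1 - t) * v ^ t
        = ∑ t ∈ Finset.range (N + 1), (qBinom q N (t + 1) * g (t + 1)
            + q ^ (N - t) * qBinom q N t * g (t + 1)) + qBinom q N 0 * g 0 := by
          simp only [mul_assoc, hg, Finset.sum_range_succ' _ (N + 1), qBinom_succ_succ hq,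
            qBinom_zero_right hq, add_mul]
      _ = ∑ t ∈ Finset.range (N + 1 + 1), qBinom q N t * g t
            + ∑ t ∈ Finset.range (N + 1), q ^ (N - t) * qBinom q N t * g (t + 1) := by
          rw [Finset.sum_add_distrib, Finset.sum_range_succ' (fun t => qBinom q N t * g t)]
          ring
      _ = ∑ t ∈ Finset.range (N + 1), (1 - u * v * q ^ N)
            * (qBinom q N t * qPochGen q u t * qPochGen q v (N - t) * v ^ t) := by
          rw [Finset.sum_range_succ, qBinom_of_lt N.lt_succ_self, zero_mul, add_zero,
            ← Finset.sum_add_distrib]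
          exact Finset.sum_congr rfl hterm
      _ = qPochGen q (u * v) (N + 1) := by
          rw [← Finset.mul_sum, ih, qPochGen_succ]
          ring

def PhiScalar (q : ℂ) (g m : ℕ) (lam mu : ℂ) : ℂ :=
  (mu / lam) ^ g * qPochGen q lam g * qPochGen q (mu / lam) (m - g) / qPochGen q mu m

/-- `Φ_q(g|m;λ,μ)` for `n = 1`. -/
def Phi₁ (q : ℂ) (g m : ℕ) (lam mu : ℂ) : ℂ :=
  PhiScalar q g m lam mu * qBinom q m g

lemma sum_range_Phi₁_mul_Phi₁ (hq : ∀ m : ℕ, 0 < m → q ^ m ≠ 1) (a : ℂ) {b : ℂ}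
    (hb : b ≠ 0) (c : ℂ) {g N : ℕ} (hbN : qPochGen q b (g + N) ≠ 0) :
    ∑ t ∈ Finset.range (N + 1), Phi₁ q g (g + t) a b * Phi₁ q (g + t) (g + N) b c
      = Phi₁ q g (g + N) a c := by
  have hca : b / a * (c / b) = c / a := by field_simp
  have hterm : ∀ t ∈ Finset.range (N + 1),
      Phi₁ q g (g + t) a b * Phi₁ q (g + t) (g + N) b c
        = (c / a) ^ g * qPochGen q a g / qPochGen q c (g + N) * qBinom q (g + N) g
          * (qBinom q N t * qPochGen q (b / a) t * qPochGen q (c / b) (N - t) * (c / b) ^ t) := by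
    intro t ht
    have htN : t ≤ N := Nat.lt_succ_iff.mp (Finset.mem_range.mp ht)
    have hbinom := qBinom_mul_qBinom hq (Nat.le_add_right g t) (Nat.add_le_add_left htN g)
    have hbt : qPochGen q b (g + t) ≠ 0 := qPochGen_ne_zero_of_le hbN (by omega)
    have hpow : (b / a) ^ g * (c / b) ^ (g + t) = (c / a) ^ g * (c / b) ^ t := by
      rw [pow_add, ← mul_assoc, ← mul_pow, hca]
    simp only [Nat.add_sub_cancel_left] at hbinom
    simp only [Phi₁, PhiScalar, Nat.add_sub_cancel_left, Nat.add_sub_add_left]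
    field_simp
    linear_combination qPochGen q a g * qPochGen q (b / a) t * qPochGen q (c / b) (N - t)
      / qPochGen q c (g + N) * ((b / a) ^ g * (c / b) ^ (g + t) * hbinom
        + qBinom q (g + N) g * qBinom q N t * hpow)
  rw [Finset.sum_congr rfl hterm, ← Finset.mul_sum, qVandermonde hq,
    hca, Phi₁, PhiScalar, Nat.add_sub_cancel_left]
  ring

lemma sum_Icc_Phi₁_mul_Phi₁ (hq : ∀ m : ℕ, 0 < m → q ^ m ≠ 1) (a : ℂ) {b : ℂ}
    (hb : b ≠ 0) (c : ℂ) {g m : ℤ} (hg : 0 ≤ g) (hgm : g ≤ m)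
    (hbm : qPochGen q b m.toNat ≠ 0) :
    ∑ t ∈ Finset.Icc g m, Phi₁ q g.toNat t.toNat a b * Phi₁ q t.toNat m.toNat b c
      = Phi₁ q g.toNat m.toNat a c := by
  lift g to ℕ using hg
  obtain ⟨N, rfl⟩ : ∃ N : ℕ, m = g + N := ⟨(m - g).toNat, by omega⟩
  have hlen : ((g : ℤ) + N + 1 - g).toNat = N + 1 := by omega
  have hcast : ∀ t : ℕ, ((g : ℤ) + t).toNat = g + t := fun t => by omega
  rw [hcast] at hbm ⊢
  rw [Int.Icc_eq_finset_map, Finset.sum_map, hlen]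
  simp only [Function.Embedding.trans_apply, Nat.castEmbedding_apply, addLeftEmbedding_apply,
    hcast, Int.toNat_natCast]
  exact sum_range_Phi₁_mul_Phi₁ hq a hb c hbm

section Tuples

variable {n : ℕ}

lemma isum_sub (x y : Fin n → ℤ) : isum (x - y) = isum x - isum y := by
  simp [isum, Finset.sum_sub_distrib]

lemma isum_nonneg {x : Fin n → ℤ} (h : 0 ≤ x) : 0 ≤ isum x :=
  Finset.sum_nonneg fun a _ => h a

lemma isum_mono {x y : Fin n → ℤ} (h : x ≤ y) : isum x ≤ isum y :=
  Finset.sum_le_sum fun a _ => h a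

lemma isum_snoc (x : Fin (n + 1) → ℤ) : isum x = isum (Fin.init x) + x (Fin.last n) :=
  Fin.sum_univ_castSucc x

lemma ipair_snoc (x y : Fin (n + 1) → ℤ) :
    ipair x y = ipair (Fin.init x) (Fin.init y) + isum (Fin.init x) * y (Fin.last n) := by
  simp only [ipair, isum, Fin.sum_univ_castSucc, Fin.castSucc_lt_castSucc_iff,
    Fin.castSucc_lt_last, if_true, not_lt.mpr (Fin.le_last _), if_false, Finset.sum_const_zero,
    add_zero, Finset.sum_mul, ← Finset.sum_add_distrib]
  rfl

lemma Fin.snoc_mem_Icc {α : Type*} [PartialOrder α] [LocallyFiniteOrder α] [DecidableEq α]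
    {i k : Fin (n + 1) → α} {j : Fin n → α} {t : α} :
    Fin.snoc j t ∈ Finset.Icc i k ↔ j ∈ Finset.Icc (Fin.init i) (Fin.init k) ∧
      t ∈ Finset.Icc (i (Fin.last n)) (k (Fin.last n)) := by
  simp only [Finset.mem_Icc, Pi.le_def, Fin.forall_iff_castSucc, Fin.snoc_castSucc, Fin.snoc_last,
    Fin.init]
  tauto

lemma Fin.sum_Icc_snoc {α M : Type*} [PartialOrder α] [LocallyFiniteOrder α] [DecidableEq α]
    [AddCommMonoid M] (i k : Fin (n + 1) → α) (F : (Fin (n + 1) → α) → M) :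
    ∑ j ∈ Finset.Icc i k, F j
      = ∑ j ∈ Finset.Icc (Fin.init i) (Fin.init k),
          ∑ t ∈ Finset.Icc (i (Fin.last n)) (k (Fin.last n)), F (Fin.snoc j t) := by
  rw [← Finset.sum_product_right']
  refine (Finset.sum_equiv (Fin.snocEquiv fun _ => α) (fun p => ?_) fun _ _ => rfl).symm
  rw [Finset.mem_product, show (Fin.snocEquiv fun _ => α) p = Fin.snoc p.2 p.1 from rfl,
    Fin.snoc_mem_Icc, and_comm]

end Tuples

lemma PhiScalar_add (hq0 : q ≠ 0) {g m g₂ m₂ : ℕ} (hgm : g ≤ m) (hgm₂ : g₂ ≤ m₂) (lam mu : ℂ) :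
    q ^ ((m - g) * g₂) * PhiScalar q (g + g₂) (m + m₂) lam mu
      = PhiScalar q g m lam mu * PhiScalar q g₂ m₂ (lam * q ^ g) (mu * q ^ m) := by
  have hsub : m + m₂ - (g + g₂) = (m - g) + (m₂ - g₂) := by omega
  have hratio : mu * q ^ m / (lam * q ^ g) = mu / lam * q ^ (m - g) := by
    rw [mul_div_mul_comm, pow_sub₀ q hq0 hgm, div_eq_mul_inv (q ^ m)]
  simp only [PhiScalar, hsub, qPochGen_add, hratio, mul_pow, pow_add, ← pow_mul]
  ring

lemma Phi_of_le {n : ℕ} {γ β : Fin n → ℤ} (h0 : 0 ≤ γ) (h1 : γ ≤ β) (lam mu : ℂ) :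
    Phi q γ β lam mu = q ^ ipair (β - γ) γ
      * PhiScalar q (isum γ).toNat (isum β).toNat lam mu
      * ∏ a, qBinom q (β a).toNat (γ a).toNat := by
  have hsum : (isum β - isum γ).toNat = (isum β).toNat - (isum γ).toNat := by
    have := isum_nonneg h0; have := isum_mono h1; omega
  have hbinom : ∀ a, qPoch q (β a).toNat / (qPoch q (γ a).toNat * qPoch q (β a - γ a).toNat)
      = qBinom q (β a).toNat (γ a).toNat := fun a => by
    have : (0 : ℤ) ≤ γ a := h0 a
    have : γ a ≤ β a := h1 a
    rw [qBinom, if_pos (by omega), show (β a - γ a).toNat = (β a).toNat - (γ a).toNat by omega]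
  simp only [Phi, if_pos (And.intro h0 h1), PhiScalar, hsum, hbinom]
  ring

lemma Phi_snoc (hq0 : q ≠ 0) {n : ℕ} {γ β : Fin (n + 1) → ℤ} (h0 : 0 ≤ γ) (h1 : γ ≤ β)
    (lam mu : ℂ) :
    Phi q γ β lam mu = Phi q (Fin.init γ) (Fin.init β) lam mu
      * Phi₁ q (γ (Fin.last n)).toNat (β (Fin.last n)).toNat
          (lam * q ^ (isum (Fin.init γ)).toNat) (mu * q ^ (isum (Fin.init β)).toNat) := by
  have h0' : 0 ≤ Fin.init γ := fun a => h0 _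
  have h1' : Fin.init γ ≤ Fin.init β := fun a => h1 _
  have hγ := isum_nonneg h0'
  have hγβ := isum_mono h1'
  have hlast₀ : (0 : ℤ) ≤ γ (Fin.last n) := h0 _
  have hlast₁ : γ (Fin.last n) ≤ β (Fin.last n) := h1 _
  have hexp : ipair (β - γ) γ = ipair (Fin.init β - Fin.init γ) (Fin.init γ)
      + (((isum (Fin.init β)).toNat - (isum (Fin.init γ)).toNat) * (γ (Fin.last n)).toNat : ℕ) := by
    rw [ipair_snoc, show Fin.init (β - γ) = Fin.init β - Fin.init γ from rfl, isum_sub,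
      Nat.cast_mul, Nat.cast_sub (by omega), Int.toNat_of_nonneg hγ,
      Int.toNat_of_nonneg (hγ.trans hγβ), Int.toNat_of_nonneg hlast₀]
  rw [Phi_of_le h0 h1, Phi_of_le h0' h1', Phi₁, hexp, zpow_add₀ hq0, zpow_natCast,
    isum_snoc γ, isum_snoc β, Int.toNat_add hγ hlast₀,
    Int.toNat_add (hγ.trans hγβ) (hlast₀.trans hlast₁), Fin.prod_univ_castSucc,
    mul_assoc (q ^ _) (q ^ _), PhiScalar_add hq0 (by omega) (by omega)]
  simp only [Fin.init]
  ring

lemma sum_Phi_mul_Phi (hq0 : q ≠ 0) (hq : ∀ m : ℕ, 0 < m → q ^ m ≠ 1) {n : ℕ}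
    {i k : Fin n → ℤ} (hi : 0 ≤ i) (hik : i ≤ k) (a : ℂ) {b : ℂ} (hb : b ≠ 0) (c : ℂ)
    (hbk : qPochGen q b (isum k).toNat ≠ 0) :
    ∑ j ∈ Finset.Icc i k, Phi q i j a b * Phi q j k b c = Phi q i k a c := by
  induction n with
  | zero =>
    obtain rfl : i = k := Subsingleton.elim i k
    simp [Phi, isum, ipair]
  | succ n ih =>
    have hi' : 0 ≤ Fin.init i := fun x => hi _
    have hk' : 0 ≤ Fin.init k := hi'.trans fun x => hik _
    have hklast : (0 : ℤ) ≤ k (Fin.last n) := (hi _).trans (hik _)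
    have hsplit : (isum k).toNat = (isum (Fin.init k)).toNat + (k (Fin.last n)).toNat := by
      rw [isum_snoc k, Int.toNat_add (isum_nonneg hk') hklast]
    set A := a * q ^ (isum (Fin.init i)).toNat
    set C := c * q ^ (isum (Fin.init k)).toNat
    have hfactor : ∀ j ∈ Finset.Icc (Fin.init i) (Fin.init k),
        ∀ t ∈ Finset.Icc (i (Fin.last n)) (k (Fin.last n)),
        Phi q i (Fin.snoc j t) a b * Phi q (Fin.snoc j t) k b c
          = Phi q (Fin.init i) j a b * Phi q j (Fin.init k) b c
            * (Phi₁ q (i (Fin.last n)).toNat t.toNat A (b * q ^ (isum j).toNat)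
              * Phi₁ q t.toNat (k (Fin.last n)).toNat (b * q ^ (isum j).toNat) C) := by
      intro j hj t ht
      obtain ⟨hij, hjk⟩ := Finset.mem_Icc.mp (Fin.snoc_mem_Icc.mpr ⟨hj, ht⟩)
      rw [Phi_snoc hq0 hi hij, Phi_snoc hq0 (hi.trans hij) hjk]
      simp only [Fin.init_snoc, Fin.snoc_last]
      ring
    have hinner : ∀ j ∈ Finset.Icc (Fin.init i) (Fin.init k),
        ∑ t ∈ Finset.Icc (i (Fin.last n)) (k (Fin.last n)),
          Phi₁ q (i (Fin.last n)).toNat t.toNat A (b * q ^ (isum j).toNat)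
            * Phi₁ q t.toNat (k (Fin.last n)).toNat (b * q ^ (isum j).toNat) C
          = Phi₁ q (i (Fin.last n)).toNat (k (Fin.last n)).toNat A C := by
      intro j hj
      obtain ⟨-, hjk⟩ := Finset.mem_Icc.mp hj
      have hjk' : (isum j).toNat ≤ (isum (Fin.init k)).toNat :=
        Int.toNat_le_toNat (isum_mono hjk)
      exact sum_Icc_Phi₁_mul_Phi₁ hq A (mul_ne_zero hb (pow_ne_zero _ hq0)) C (hi _) (hik _)
        (qPochGen_mul_pow_ne_zero hbk (by omega))
    calc ∑ j ∈ Finset.Icc i k, Phi q i j a b * Phi q j k b c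
        = ∑ j ∈ Finset.Icc (Fin.init i) (Fin.init k),
            Phi q (Fin.init i) j a b * Phi q j (Fin.init k) b c
              * Phi₁ q (i (Fin.last n)).toNat (k (Fin.last n)).toNat A C := by
          rw [Fin.sum_Icc_snoc]
          refine Finset.sum_congr rfl fun j hj => ?_
          rw [Finset.sum_congr rfl (hfactor j hj), ← Finset.mul_sum, hinner j hj]
      _ = Phi q (Fin.init i) (Fin.init k) a c
            * Phi₁ q (i (Fin.last n)).toNat (k (Fin.last n)).toNat A C := by
          rw [← Finset.sum_mul, ih (k := Fin.init k) hi' (fun x => hik _)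
            (qPochGen_ne_zero_of_le hbk (by omega))]
      _ = Phi q i k a c := (Phi_snoc hq0 hi hik a c).symm

theorem Phi_transition_general (q : ℂ) (hq0 : q ≠ 0) (hq : ∀ m : ℕ, 0 < m → q ^ m ≠ 1)
    {n : ℕ} (i k : Fin n → ℤ) (hi : 0 ≤ i) (hik : i ≤ k)
    (a b c : ℂ) (hb : b ≠ 0)
    (hbk : qPochGen q b (isum k).toNat ≠ 0) :
    ∑ j ∈ Finset.Icc i k, Phi q i j a b * Phi q j k b c = Phi q i k a c :=
  sum_Phi_mul_Phi hq0 hq hi hik a hb c hbk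

/-- **Proposition 3.2** (transition property of `Φ_q`):
`∑_{i ≤ j ≤ k} Φ_q(i|j;a,b)·Φ_q(j|k;b,c) = Φ_q(i|k;a,c)`. -/
theorem Phi_transition (q : ℂ) (hq0 : q ≠ 0) (hq : ∀ m : ℕ, 0 < m → q ^ m ≠ 1)
    {n : ℕ} (hn : 1 ≤ n) (i k : Fin n → ℤ) (hi : 0 ≤ i) (hik : i ≤ k)
    (a b c : ℂ) (ha : a ≠ 0) (hb : b ≠ 0)
    (hbk : qPochGen q b (isum k).toNat ≠ 0)
    (hck : qPochGen q c (isum k).toNat ≠ 0) :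
    ∑ j ∈ Finset.Icc i k, Phi q i j a b * Phi q j k b c = Phi q i k a c :=
  Phi_transition_general q hq0 hq i k hi hik a b c hb hbk
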